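/- arXiv:2506.07333 — 2 statements merged into one kernel-verified Lean document; each statement's English description precedes it below -/
import Mathlib

section
/- Let φ be a 1-coercive Legendre distance-generating function on ℝ^n and f : dom φ → (-∞,∞] proper, lsc, and φ-prox-bounded with threshold λ_f. Fix λ ∈ (0, λ_f), x̄ ∈ int dom φ, u ∈ ℝ^n, and set ȳ := ∇φ*(λu + ∇φ(x̄)). Then the following are equivalent: (i) u ∈ ∂_λ^φ f(x̄) (the left Bregman level proximal subdifferential); (ii) x̄ ∈ prox_{λf}(ȳ); (iii) ∇φ(ȳ) ∈ ∂(conv(λf+φ))(x̄) and conv(λf+φ)(x̄) = (λf+φ)(x̄). -/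
open Set Filter Topology RealInnerProductSpace

noncomputable section

variable {n : ℕ}

local notation "En" => EuclideanSpace ℝ (Fin n)

/-- The Bregman distance induced by `φ` with gradient map `gradφ`. -/
def breg (φ : En → ℝ) (gradφ : En → En) (x y : En) : ℝ :=
  φ x - φ y - ⟪gradφ y, x - y⟫

/-- The Fenchel subdifferential of `φ` (viewed as `+∞` off `domφ`). -/
def fenchelSub (φ : En → ℝ) (domφ : Set En) (x : En) : Set En :=
  {u | x ∈ domφ ∧ ∀ x' ∈ domφ, φ x + ⟪u, x' - x⟫ ≤ φ x'}

/-- `φ` (viewed as `+∞` off `domφ`) is a Legendre function. -/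
def IsLegendre (φ : En → ℝ) (domφ : Set En) (gradφ : En → En) : Prop :=
  (interior domφ).Nonempty ∧
  LowerSemicontinuousOn φ domφ ∧ ConvexOn ℝ domφ φ ∧
  (∀ y ∈ interior domφ, HasGradientWithinAt φ (gradφ y) (interior domφ) y) ∧
  (∀ (xk : ℕ → En) (b : En), (∀ k, xk k ∈ interior domφ) →
      Tendsto xk atTop (𝓝 b) → b ∈ frontier domφ →
      Tendsto (fun k => ‖gradφ (xk k)‖) atTop atTop) ∧
  (∀ s : Set En, Convex ℝ s → s ⊆ {x | (fenchelSub φ domφ x).Nonempty} →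
      StrictConvexOn ℝ s φ)

/-- `φ` is 1-coercive. -/
def Coercive1 (φ : En → ℝ) (domφ : Set En) : Prop :=
  ∀ M : ℝ, ∃ R : ℝ, ∀ x ∈ domφ, R ≤ ‖x‖ → M * ‖x‖ ≤ φ x

/-- The left Bregman proximal mapping. -/
def proxSet (φ : En → ℝ) (domφ : Set En) (gradφ : En → En) (lam : ℝ)
    (f : En → EReal) (yb : En) : Set En :=
  {xb | xb ∈ domφ ∧ ∀ x ∈ domφ,
      f xb + ((lam⁻¹ * breg φ gradφ xb yb : ℝ) : EReal) ≤
        f x + ((lam⁻¹ * breg φ gradφ x yb : ℝ) : EReal)}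

/-- The left Bregman–Moreau envelope. -/
def envL (φ : En → ℝ) (domφ : Set En) (gradφ : En → En) (lam : ℝ)
    (f : En → EReal) (yb : En) : EReal :=
  ⨅ x ∈ domφ, (f x + ((lam⁻¹ * breg φ gradφ x yb : ℝ) : EReal))

/-- The left Bregman `λ`-level proximal subdifferential. -/
def psub (φ : En → ℝ) (domφ : Set En) (gradφ : En → En) (lam : ℝ)
    (f : En → EReal) (xb : En) : Set En :=
  {u | xb ∈ interior domφ ∧ ∀ x ∈ domφ,
      f xb + ((⟪u, x - xb⟫ - lam⁻¹ * breg φ gradφ x xb : ℝ) : EReal) ≤ f x}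

/-- Convexity of an `EReal`-valued function on `ℝⁿ`. -/
def ConvexE (g : En → EReal) : Prop :=
  ∀ x y : En, ∀ t : ℝ, 0 < t → t < 1 →
    g (t • x + (1 - t) • y) ≤ (t : EReal) * g x + ((1 - t : ℝ) : EReal) * g y

/-- The convex hull of `ψ : ℝⁿ → [-∞,∞]`. -/
def convHullE (ψ : En → EReal) (x : En) : EReal :=
  sSup {r | ∃ g, ConvexE g ∧ (∀ y, g y ≤ ψ y) ∧ r = g x}

/-- Full-space Fenchel subdifferential of `ψ : ℝⁿ → [-∞,∞]`. -/
def fsubFull (ψ : En → EReal) (x : En) : Set En :=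
  {w | ∀ x', ψ x + ((⟪w, x' - x⟫ : ℝ) : EReal) ≤ ψ x'}


private lemma ereal_cases (x : EReal) (hx : x ≠ ⊥) : x = ⊤ ∨ ∃ r : ℝ, x = (r : EReal) := by
  induction x using EReal.rec with
  | bot => exact absurd rfl hx
  | coe r => exact Or.inr ⟨r, rfl⟩
  | top => exact Or.inl rfl

private lemma ereal_master {lam : ℝ} (hlam : 0 < lam) (p q : EReal) (hp : p ≠ ⊥) (hq : q ≠ ⊥)
    (a b c d : ℝ) (h : lam * (a - b) = c - d) :
    p + (a : EReal) ≤ q + (b : EReal) ↔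
      (lam : EReal) * p + (c : EReal) ≤ (lam : EReal) * q + (d : EReal) := by
  have hltop : (lam : EReal) * ⊤ = ⊤ := EReal.coe_mul_top_of_pos hlam
  induction p using EReal.rec with
  | bot => exact absurd rfl hp
  | top =>
    induction q using EReal.rec with
    | bot => exact absurd rfl hq
    | top => simp [hltop, EReal.top_add_coe]
    | coe s =>
      rw [hltop, EReal.top_add_coe, ← EReal.coe_mul, ← EReal.coe_add, ← EReal.coe_add,
        EReal.top_add_coe]
      simp only [top_le_iff]
      exact ⟨fun hx => absurd hx (EReal.coe_ne_top _),
        fun hx => absurd hx (EReal.coe_ne_top _)⟩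
  | coe r =>
    induction q using EReal.rec with
    | bot => exact absurd rfl hq
    | top =>
      rw [hltop, EReal.top_add_of_ne_bot (EReal.coe_ne_bot d),
        EReal.top_add_of_ne_bot (EReal.coe_ne_bot b)]
      simp
    | coe s =>
      rw [← EReal.coe_mul, ← EReal.coe_mul, ← EReal.coe_add, ← EReal.coe_add,
        ← EReal.coe_add, ← EReal.coe_add, EReal.coe_le_coe_iff, EReal.coe_le_coe_iff]
      constructor <;> intro hx <;> nlinarith [mul_le_mul_of_nonneg_left hx hlam.le]

/-- pointwise characterizations of the Bregman level proximal
subdifferential: with `ȳ := ∇φ*(λu + ∇φ(x̄))`, the following are equivalent: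
(i) `u ∈ ∂_λ^φ f(x̄)`; (ii) `x̄ ∈ prox_{λf}(ȳ)`;
(iii) `∇φ(ȳ) ∈ ∂(conv(λf+φ))(x̄)` and `conv(λf+φ)(x̄) = (λf+φ)(x̄)`. -/
theorem psub_pointwise_characterization (φ : En → ℝ) (domφ : Set En)
    (gradφ gradφs : En → En)
    (hLeg : IsLegendre φ domφ gradφ)
    (hcoer : Coercive1 φ domφ)
    (hsurj : ∀ η : En, gradφs η ∈ interior domφ ∧ gradφ (gradφs η) = η)
    (f : En → EReal) (hftop : ∀ x ∉ domφ, f x = ⊤) (hfbot : ∀ x, f x ≠ ⊥)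
    (hfproper : ∃ x ∈ domφ, f x ≠ ⊤)
    (hflsc : LowerSemicontinuousOn f domφ)
    (lam : ℝ) (hlam : 0 < lam)
    -- `λ` is below the `φ`-prox-boundedness threshold of `f`
    (hpb : ∃ μ : ℝ, lam < μ ∧ ∃ y ∈ interior domφ, envL φ domφ gradφ μ f y ≠ ⊥)
    (xb : En) (hxb : xb ∈ interior domφ) (u : En)
    (yb : En) (hyb : yb = gradφs (lam • u + gradφ xb)) :
    (u ∈ psub φ domφ gradφ lam f xb ↔ xb ∈ proxSet φ domφ gradφ lam f yb) ∧
    (xb ∈ proxSet φ domφ gradφ lam f yb ↔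
      (gradφ yb ∈
          fsubFull (convHullE fun x => (lam : EReal) * f x + ((φ x : ℝ) : EReal)) xb ∧
        convHullE (fun x => (lam : EReal) * f x + ((φ x : ℝ) : EReal)) xb =
          (lam : EReal) * f xb + ((φ xb : ℝ) : EReal))) := by
  obtain ⟨hyb_mem', hgy'⟩ := hsurj (lam • u + gradφ xb)
  have hgy : gradφ yb = lam • u + gradφ xb := by rw [hyb]; exact hgy'
  have hne : lam ≠ 0 := ne_of_gt hlam
  set ψ : En → EReal := fun x => (lam : EReal) * f x + ((φ x : ℝ) : EReal) with hψ
  have hψ_top : ∀ x, f x = ⊤ → ψ x = ⊤ := by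
    intro x hx
    simp only [hψ, hx, EReal.coe_mul_top_of_pos hlam, EReal.top_add_coe]
  have hψ_real : ∀ x (r : ℝ), f x = (r : EReal) → ψ x = ((lam * r + φ x : ℝ) : EReal) := by
    intro x r hx
    simp only [hψ, hx]
    rw [← EReal.coe_mul, ← EReal.coe_add]
  have hψ_ne_bot : ∀ x, ψ x ≠ ⊥ := by
    intro x
    rcases ereal_cases (f x) (hfbot x) with hx | ⟨r, hx⟩
    · rw [hψ_top x hx]; exact top_ne_bot
    · rw [hψ_real x r hx]; exact EReal.coe_ne_bot _
  have hinner : ∀ v : En, ⟪gradφ yb, v⟫ = lam * ⟪u, v⟫ + ⟪gradφ xb, v⟫ := by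
    intro v; rw [hgy, inner_add_left, real_inner_smul_left]
  -- pointwise equivalence for (i) ↔ (ii)
  have key1 : ∀ x, (f xb + ((lam⁻¹ * breg φ gradφ xb yb : ℝ) : EReal) ≤
        f x + ((lam⁻¹ * breg φ gradφ x yb : ℝ) : EReal)) ↔
      (f xb + ((⟪u, x - xb⟫ - lam⁻¹ * breg φ gradφ x xb : ℝ) : EReal) ≤ f x) := by
    intro x
    have hid : (1 : ℝ) * (lam⁻¹ * breg φ gradφ xb yb - lam⁻¹ * breg φ gradφ x yb)
        = (⟪u, x - xb⟫ - lam⁻¹ * breg φ gradφ x xb) - 0 := by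
      simp only [breg, hinner, inner_sub_right]
      field_simp
      ring
    have h2 := ereal_master one_pos (f xb) (f x) (hfbot xb) (hfbot x)
      (lam⁻¹ * breg φ gradφ xb yb) (lam⁻¹ * breg φ gradφ x yb)
      (⟪u, x - xb⟫ - lam⁻¹ * breg φ gradφ x xb) 0 hid
    rw [EReal.coe_one, one_mul, one_mul, EReal.coe_zero, add_zero] at h2
    exact h2
  -- pointwise equivalence for (ii) ↔ subgradient inequality for ψ
  have key2 : ∀ x, (f xb + ((lam⁻¹ * breg φ gradφ xb yb : ℝ) : EReal) ≤
        f x + ((lam⁻¹ * breg φ gradφ x yb : ℝ) : EReal)) ↔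
      ((lam : EReal) * f xb + ((φ xb + ⟪gradφ yb, x - xb⟫ : ℝ) : EReal) ≤
        (lam : EReal) * f x + ((φ x : ℝ) : EReal)) := by
    intro x
    have hid : lam * (lam⁻¹ * breg φ gradφ xb yb - lam⁻¹ * breg φ gradφ x yb)
        = (φ xb + ⟪gradφ yb, x - xb⟫) - φ x := by
      simp only [breg, inner_sub_right]
      field_simp
      ring
    exact ereal_master hlam (f xb) (f x) (hfbot xb) (hfbot x) _ _ _ _ hid
  have hψ_add : ∀ x x' : En, ψ x + ((⟪gradφ yb, x' - x⟫ : ℝ) : EReal)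
      = (lam : EReal) * f x + ((φ x + ⟪gradφ yb, x' - x⟫ : ℝ) : EReal) := by
    intro x x'
    simp only [hψ]
    rw [add_assoc, ← EReal.coe_add]
  -- main equivalence 1
  have main1 : u ∈ psub φ domφ gradφ lam f xb ↔ xb ∈ proxSet φ domφ gradφ lam f yb := by
    constructor
    · rintro ⟨-, h⟩
      exact ⟨interior_subset hxb, fun x hx => (key1 x).2 (h x hx)⟩
    · rintro ⟨-, h⟩
      exact ⟨hxb, fun x hx => (key1 x).1 (h x hx)⟩
  -- (ii) ↔ ∇φ(ȳ) ∈ ∂ψ(x̄)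
  have main2 : xb ∈ proxSet φ domφ gradφ lam f yb ↔ gradφ yb ∈ fsubFull ψ xb := by
    constructor
    · rintro ⟨-, hineq⟩ x'
      by_cases hx' : x' ∈ domφ
      · have h1 := (key2 x').1 (hineq x' hx')
        rw [hψ_add xb x']
        exact h1
      · have : ψ x' = ⊤ := hψ_top x' (hftop x' hx')
        rw [this]; exact le_top
    · intro hsub
      refine ⟨interior_subset hxb, fun x hx => ?_⟩
      apply (key2 x).2
      rw [← hψ_add xb x]
      exact hsub x
  -- ∂ψ(x̄) ↔ ∂(conv ψ)(x̄) together with conv ψ(x̄) = ψ(x̄)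
  have hconv_le : ∀ g, ConvexE g → (∀ y, g y ≤ ψ y) → ∀ x, g x ≤ convHullE ψ x :=
    fun g hg hle x => le_sSup ⟨g, hg, hle, rfl⟩
  have hhull_le : ∀ x, convHullE ψ x ≤ ψ x := by
    intro x
    apply sSup_le
    rintro r ⟨g, -, hle, rfl⟩
    exact hle x
  have main3 : gradφ yb ∈ fsubFull ψ xb ↔
      (gradφ yb ∈ fsubFull (convHullE ψ) xb ∧ convHullE ψ xb = ψ xb) := by
    constructor
    · intro hsub
      obtain ⟨x0, hx0, hx0t⟩ := hfproper
      have hψxb_ne_top : ψ xb ≠ ⊤ := by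
        intro htop
        obtain ⟨r0, hr0⟩ := (ereal_cases (f x0) (hfbot x0)).resolve_left hx0t
        have h1 := hsub x0
        rw [htop, EReal.top_add_of_ne_bot (EReal.coe_ne_bot _), hψ_real x0 r0 hr0] at h1
        exact (EReal.coe_ne_top _) (top_le_iff.mp h1)
      obtain ⟨r, hr⟩ := (ereal_cases (ψ xb) (hψ_ne_bot xb)).resolve_left hψxb_ne_top
      set g : En → EReal := fun x => ((r + ⟪gradφ yb, x - xb⟫ : ℝ) : EReal) with hgdef
      have hgconv : ConvexE g := by
        intro x y t ht0 ht1
        have hin : ⟪gradφ yb, t • x + (1 - t) • y - xb⟫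
            = t * ⟪gradφ yb, x - xb⟫ + (1 - t) * ⟪gradφ yb, y - xb⟫ := by
          simp only [inner_sub_right, inner_add_right, real_inner_smul_right]
          ring
        simp only [hgdef]
        rw [← EReal.coe_mul, ← EReal.coe_mul, ← EReal.coe_add, EReal.coe_le_coe_iff, hin]
        apply le_of_eq
        ring
      have hgle : ∀ y, g y ≤ ψ y := by
        intro y
        have h1 := hsub y
        rw [hr] at h1
        calc g y = ((r : ℝ) : EReal) + ((⟪gradφ yb, y - xb⟫ : ℝ) : EReal) := by
              simp only [hgdef]; rw [← EReal.coe_add]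
          _ ≤ ψ y := h1
      have hgxb : g xb = ψ xb := by
        simp only [hgdef, sub_self, inner_zero_right, add_zero]
        exact hr.symm
      have heq : convHullE ψ xb = ψ xb := by
        apply le_antisymm (hhull_le xb)
        calc ψ xb = g xb := hgxb.symm
          _ ≤ convHullE ψ xb := hconv_le g hgconv hgle xb
      refine ⟨fun x' => ?_, heq⟩
      rw [heq, hr]
      calc ((r : ℝ) : EReal) + ((⟪gradφ yb, x' - xb⟫ : ℝ) : EReal) = g x' := by
            simp only [hgdef]; rw [← EReal.coe_add]
        _ ≤ convHullE ψ x' := hconv_le g hgconv hgle x'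
    · rintro ⟨hsub, heq⟩ x'
      calc ψ xb + ((⟪gradφ yb, x' - xb⟫ : ℝ) : EReal)
          = convHullE ψ xb + ((⟪gradφ yb, x' - xb⟫ : ℝ) : EReal) := by rw [heq]
        _ ≤ convHullE ψ x' := hsub x'
        _ ≤ ψ x' := hhull_le x'
  exact ⟨main1, main2.trans main3⟩


end
end

section
/- Let φ be a 1-coercive Legendre distance-generating function on ℝ^n and f : dom φ → (-∞,∞] proper, lsc, φ-prox-bounded. Fix λ ∈ (0, λ_f) and x̄ ∈ int dom φ. Then ∂_λ^φ f(x̄) is a singleton if and only if conv(f + λ^{-1}φ) is differentiable at x̄ and coincides with f + λ^{-1}φ at x̄. In that case, ∇conv(f + λ^{-1}φ)(x̄) = ū + λ^{-1}∇φ(x̄), where {ū} = ∂_λ^φ f(x̄). -/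
open Set Filter Topology RealInnerProductSpace

noncomputable section

variable {n : ℕ}

local notation "En" => EuclideanSpace ℝ (Fin n)

/-- `g` is (Fréchet) differentiable at `x̄` with gradient `v`. -/
def DiffAtE (g : En → EReal) (xb v : En) : Prop :=
  g xb ≠ ⊤ ∧ g xb ≠ ⊥ ∧ ∀ ε : ℝ, 0 < ε → ∀ᶠ y in 𝓝 xb,
    g xb + ((⟪v, y - xb⟫ - ε * ‖y - xb‖ : ℝ) : EReal) ≤ g y ∧
    g y ≤ g xb + ((⟪v, y - xb⟫ + ε * ‖y - xb‖ : ℝ) : EReal)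

/-!
Adding `λ⁻¹φ` turns the Bregman proximal inequality into an affine minorant: `u ∈ ∂_λ^φ f(x̄)`
iff the affine function of slope `u + λ⁻¹∇φ(x̄)` through `(x̄, ψ(x̄))` lies below
`ψ = f + λ⁻¹φ`. Affine functions are convex, so these are exactly the affine minorants of
`conv ψ` through `(x̄, ψ(x̄))`, and such a minorant forces `conv ψ(x̄) = ψ(x̄)`. It remains to
see that a convex function has a unique subgradient at `x̄` iff it is differentiable there.
Differentiability pins the subgradient down directly. Conversely, uniqueness puts `x̄` in the
interior of the domain (otherwise a normal vector could be added to the subgradient); there the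
one-sided directional derivative is sublinear and, by Hahn–Banach, each of its values is attained
by a linear minorant, which is a subgradient, so it equals `⟪v, ·⟫`. Jensen's inequality over an
orthonormal basis then upgrades these directional limits to Fréchet differentiability.
-/

lemma exists_linearMap_le_sublinear_eq {V : Type*} [AddCommGroup V] [Module ℝ V] (N : V → ℝ)
    (N_hom : ∀ c : ℝ, 0 < c → ∀ x, N (c • x) = c * N x) (N_add : ∀ x y, N (x + y) ≤ N x + N y)
    (d : V) : ∃ ℓ : V →ₗ[ℝ] ℝ, ℓ d = N d ∧ ∀ x, ℓ x ≤ N x := by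
  have N_zero : N 0 = 0 := by
    have := N_hom 2 two_pos 0
    rw [smul_zero] at this
    linarith
  have H : ∀ c : ℝ, c • d = 0 → RingHom.id ℝ c • N d = 0 := by
    intro c hc
    rcases smul_eq_zero.1 hc with rfl | rfl
    · exact zero_smul ℝ _
    · rw [N_zero, smul_zero]
  set f := LinearPMap.mkSpanSingleton' d (N d) H
  have hfN : ∀ y : f.domain, f y ≤ N y := by
    rintro ⟨y, hy⟩
    obtain ⟨c, rfl⟩ := Submodule.mem_span_singleton.1 hy
    rw [LinearPMap.mkSpanSingleton'_apply, RingHom.id_apply, smul_eq_mul]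
    rcases lt_trichotomy c 0 with hc | rfl | hc
    · have h := N_add (c • d) ((-c) • d)
      rw [← add_smul, add_neg_cancel, zero_smul, N_zero, N_hom (-c) (neg_pos.2 hc)] at h
      linarith
    · simp [N_zero]
    · exact (N_hom c hc d).ge
  obtain ⟨ℓ, hℓf, hℓN⟩ := exists_extension_of_le_sublinear f N N_hom N_add hfN
  refine ⟨ℓ, ?_, hℓN⟩
  exact (hℓf ⟨d, Submodule.mem_span_singleton_self d⟩).trans
    (LinearPMap.mkSpanSingleton'_apply_self _ _ _ _)

section Subgradient

variable {E : Type*} [NormedAddCommGroup E] [InnerProductSpace ℝ E]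

def HasSubgradientOn (F : E → ℝ) (v : E) (D : Set E) (x : E) : Prop :=
  ∀ y ∈ D, F x + ⟪v, y - x⟫ ≤ F y

def rightLineDeriv (F : E → ℝ) (x d : E) : ℝ :=
  derivWithin (fun t : ℝ => F (x + t • d)) (Ioi 0) 0

variable {D : Set E} {F : E → ℝ} {x v : E}

lemma eventually_add_smul_mem (hx : x ∈ interior D) (d : E) :
    ∀ᶠ t in 𝓝 (0 : ℝ), x + t • d ∈ D := by
  have hcont : Tendsto (fun t : ℝ => x + t • d) (𝓝 0) (𝓝 x) :=
    (by fun_prop : Continuous fun t : ℝ => x + t • d).tendsto' 0 x (by simp)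
  exact hcont.eventually (mem_interior_iff_mem_nhds.1 hx)

lemma exists_mem_Ioo_of_eventually {P : E → Prop} (hP : ∀ᶠ y in 𝓝 x, P y) (d : E) :
    ∃ t ∈ Ioo (0 : ℝ) 1, P (x + t • d) := by
  have hline : Tendsto (fun t : ℝ => x + t • d) (𝓝[>] 0) (𝓝 x) :=
    ((by fun_prop : Continuous fun t : ℝ => x + t • d).tendsto' 0 x (by simp)).mono_left
      nhdsWithin_le_nhds
  exact ((eventually_mem_set.2 (Ioo_mem_nhdsGT one_pos)).and (hline.eventually hP)).exists

lemma ConvexOn.comp_add_smul (hF : ConvexOn ℝ D F) (x d : E) :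
    ConvexOn ℝ {t : ℝ | x + t • d ∈ D} (fun t => F (x + t • d)) := by
  convert hF.comp_affineMap (AffineMap.lineMap x (x + d)) using 1 <;> ext t <;>
    simp [AffineMap.lineMap_apply_module', add_comm]

lemma ConvexOn.tendsto_rightLineDeriv (hF : ConvexOn ℝ D F) (hx : x ∈ interior D) (d : E) :
    Tendsto (fun t => (F (x + t • d) - F x) / t) (𝓝[>] 0) (𝓝 (rightLineDeriv F x d)) := by
  have h := (hF.comp_add_smul x d).hasDerivWithinAt_rightDeriv_of_mem_interior
    (mem_interior_iff_mem_nhds.2 (eventually_add_smul_mem hx d))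
  have hslope : slope (fun t : ℝ => F (x + t • d)) 0 = fun t => (F (x + t • d) - F x) / t := by
    ext t; simp [slope_def_field]
  rw [hasDerivWithinAt_iff_tendsto_slope, hslope] at h
  simpa [rightLineDeriv] using h

lemma ConvexOn.rightLineDeriv_le (hF : ConvexOn ℝ D F) (hx : x ∈ interior D) {d : E}
    (hd : x + d ∈ D) : rightLineDeriv F x d ≤ F (x + d) - F x := by
  have h := (hF.comp_add_smul x d).rightDeriv_le_slope_of_mem_interior
    (mem_interior_iff_mem_nhds.2 (eventually_add_smul_mem hx d)) (y := 1) (by simpa using hd)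
    one_pos
  simpa [slope_def_field, rightLineDeriv] using h

lemma ConvexOn.rightLineDeriv_smul (hF : ConvexOn ℝ D F) (hx : x ∈ interior D) {c : ℝ}
    (hc : 0 < c) (d : E) : rightLineDeriv F x (c • d) = c * rightLineDeriv F x d := by
  have hscale : Tendsto (fun t : ℝ => c * t) (𝓝[>] 0) (𝓝[>] 0) := by
    refine tendsto_nhdsWithin_iff.2 ⟨?_, eventually_mem_nhdsWithin.mono fun t ht => mul_pos hc ht⟩
    simpa using ((continuous_const_mul c).tendsto 0).mono_left nhdsWithin_le_nhds
  refine tendsto_nhds_unique (hF.tendsto_rightLineDeriv hx (c • d)) ?_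
  refine (((hF.tendsto_rightLineDeriv hx d).comp hscale).const_mul c).congr' ?_
  filter_upwards [eventually_mem_nhdsWithin] with t (ht : 0 < t)
  simp only [Function.comp_apply, smul_smul, mul_comm t c]
  field_simp

lemma ConvexOn.rightLineDeriv_add_le (hF : ConvexOn ℝ D F) (hx : x ∈ interior D) (d₁ d₂ : E) :
    rightLineDeriv F x (d₁ + d₂) ≤ rightLineDeriv F x d₁ + rightLineDeriv F x d₂ := by
  have h₁ := hF.tendsto_rightLineDeriv hx ((2 : ℝ) • d₁)
  have h₂ := hF.tendsto_rightLineDeriv hx ((2 : ℝ) • d₂)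
  rw [hF.rightLineDeriv_smul hx two_pos] at h₁ h₂
  have hlim := (h₁.add h₂).div_const 2
  rw [show (2 * rightLineDeriv F x d₁ + 2 * rightLineDeriv F x d₂) / 2
    = rightLineDeriv F x d₁ + rightLineDeriv F x d₂ by ring] at hlim
  refine le_of_tendsto_of_tendsto (hF.tendsto_rightLineDeriv hx (d₁ + d₂)) hlim ?_
  filter_upwards [eventually_mem_nhdsWithin,
    nhdsWithin_le_nhds (eventually_add_smul_mem hx ((2 : ℝ) • d₁)),
    nhdsWithin_le_nhds (eventually_add_smul_mem hx ((2 : ℝ) • d₂))] with t (ht : 0 < t) h₁ h₂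
  have hmid : x + t • (d₁ + d₂)
      = (1 / 2 : ℝ) • (x + t • (2 : ℝ) • d₁) + (1 / 2 : ℝ) • (x + t • (2 : ℝ) • d₂) := by
    module
  have hconv := hF.2 h₁ h₂ (by norm_num : (0 : ℝ) ≤ 1 / 2) (by norm_num : (0 : ℝ) ≤ 1 / 2)
    (by norm_num)
  rw [← hmid, smul_eq_mul, smul_eq_mul] at hconv
  calc (F (x + t • (d₁ + d₂)) - F x) / t
      ≤ ((F (x + t • (2 : ℝ) • d₁) - F x + (F (x + t • (2 : ℝ) • d₂) - F x)) / 2) / t := by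
        gcongr; linarith
    _ = _ := by ring

lemma ConvexOn.hasSubgradientOn_of_inner_le_rightLineDeriv (hF : ConvexOn ℝ D F)
    (hx : x ∈ interior D) {w : E} (hw : ∀ d, ⟪w, d⟫ ≤ rightLineDeriv F x d) :
    HasSubgradientOn F w D x := by
  intro y hy
  have h := hF.rightLineDeriv_le hx (d := y - x) (by rwa [add_sub_cancel])
  rw [add_sub_cancel] at h
  linarith [hw (y - x)]

variable [FiniteDimensional ℝ E]

lemma ConvexOn.rightLineDeriv_eq_inner (hF : ConvexOn ℝ D F) (hx : x ∈ interior D)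
    (huniq : ∀ w, HasSubgradientOn F w D x → w = v) (d : E) :
    rightLineDeriv F x d = ⟪v, d⟫ := by
  obtain ⟨ℓ, hℓd, hℓN⟩ := exists_linearMap_le_sublinear_eq (rightLineDeriv F x)
    (fun _ hc => hF.rightLineDeriv_smul hx hc) (hF.rightLineDeriv_add_le hx) d
  set w := (InnerProductSpace.toDual ℝ E).symm (LinearMap.toContinuousLinearMap ℓ)
  have hw : ∀ y, ⟪w, y⟫ = ℓ y := fun y => InnerProductSpace.toDual_symm_apply
  have hsub : HasSubgradientOn F w D x :=
    hF.hasSubgradientOn_of_inner_le_rightLineDeriv hx fun y => (hw y).trans_le (hℓN y)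
  rw [← hℓd, ← hw, huniq w hsub]

lemma ConvexOn.eventually_le_along_line (hF : ConvexOn ℝ D F) (hx : x ∈ interior D)
    (huniq : ∀ w, HasSubgradientOn F w D x → w = v) (b : E) {ε : ℝ} (hε : 0 < ε) :
    ∀ᶠ s in 𝓝 (0 : ℝ), F (x + s • b) ≤ F x + s * ⟪v, b⟫ + ε * |s| := by
  have hray : ∀ d, ∀ᶠ t in 𝓝 (0 : ℝ), 0 < t → F (x + t • d) ≤ F x + t * ⟪v, d⟫ + ε * t := by
    intro d
    have h := hF.tendsto_rightLineDeriv hx d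
    rw [hF.rightLineDeriv_eq_inner hx huniq] at h
    refine eventually_nhdsWithin_iff.1 ?_
    filter_upwards [h.eventually (gt_mem_nhds (lt_add_of_pos_right _ hε)),
      eventually_mem_nhdsWithin] with t hq (ht : 0 < t)
    rw [div_lt_iff₀ ht] at hq
    linarith
  have hneg := (continuous_neg.tendsto' (0 : ℝ) 0 neg_zero).eventually (hray (-b))
  filter_upwards [hray b, hneg] with s hpos hneg
  rcases lt_trichotomy s 0 with hs | rfl | hs
  · have h := hneg (neg_pos.2 hs)
    rw [neg_smul_neg, inner_neg_right] at h
    rw [abs_of_neg hs]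
    linarith
  · simp
  · rw [abs_of_pos hs]
    exact hpos hs

/-- Writing `y - x = ∑ cᵢ bᵢ` in an orthonormal basis, `y` is the barycentre of the points
`x + (m cᵢ) bᵢ`, so Jensen's inequality reduces the bound to the `m` coordinate lines. -/
lemma ConvexOn.eventually_le_of_eventually_le_along_lines (hF : ConvexOn ℝ D F)
    (hx : x ∈ interior D)
    (hline : ∀ b : E, ∀ ε > 0, ∀ᶠ s in 𝓝 (0 : ℝ), F (x + s • b) ≤ F x + s * ⟪v, b⟫ + ε * |s|)
    {ε : ℝ} (hε : 0 < ε) : ∀ᶠ y in 𝓝 x, F y ≤ F x + ⟪v, y - x⟫ + ε * ‖y - x‖ := by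
  set m := Module.finrank ℝ E
  set b := stdOrthonormalBasis ℝ E
  rcases Nat.eq_zero_or_pos m with hm | hm
  · have : Subsingleton E := Module.finrank_zero_iff.1 hm
    filter_upwards with y
    simp [Subsingleton.elim y x]
  have hm' : (0 : ℝ) < m := Nat.cast_pos.2 hm
  have hev : ∀ᶠ s in 𝓝 (0 : ℝ), ∀ i, x + s • b i ∈ D ∧
      F (x + s • b i) ≤ F x + s * ⟪v, b i⟫ + ε / m * |s| :=
    eventually_all.2 fun i => (eventually_add_smul_mem hx (b i)).and
      (hline (b i) (ε / m) (by positivity))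
  obtain ⟨δ, hδ, hball⟩ := Metric.eventually_nhds_iff.1 hev
  filter_upwards [Metric.ball_mem_nhds x (div_pos hδ hm')] with y hy
  set c : Fin m → ℝ := fun i => ⟪b i, y - x⟫
  have hc : ∀ i, |c i| ≤ ‖y - x‖ := fun i => by
    simpa [b.orthonormal.1 i] using abs_real_inner_le_norm (b i) (y - x)
  have hnear : ∀ i, dist (m * c i) 0 < δ := fun i => by
    rw [dist_zero_right, Real.norm_eq_abs, abs_mul, Nat.abs_cast, ← lt_div_iff₀' hm']
    exact (hc i).trans_lt (by rwa [← dist_eq_norm])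
  have hbary : y = ∑ i, (1 / m : ℝ) • (x + (m * c i) • b i) := by
    simp only [smul_add, Finset.sum_add_distrib, Finset.sum_const, Finset.card_univ,
      Fintype.card_fin, smul_smul]
    rw [← Nat.cast_smul_eq_nsmul ℝ, smul_smul]
    field_simp
    rw [b.sum_repr' (y - x)]
    simp
  have hsum : ∑ i, c i * ⟪v, b i⟫ = ⟪v, y - x⟫ := by
    conv_rhs => rw [← b.sum_repr' (y - x)]
    simp only [inner_sum, real_inner_smul_right, c]
    rfl
  calc F y ≤ ∑ i, (1 / m : ℝ) • F (x + (m * c i) • b i) := by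
        rw [hbary]
        refine hF.map_sum_le (fun _ _ => by positivity) ?_ fun i _ => (hball (hnear i) i).1
        simp [Finset.card_univ, hm'.ne']
    _ ≤ ∑ i, (1 / m : ℝ) * (F x + m * c i * ⟪v, b i⟫ + ε / m * |m * c i|) := by
        simp only [smul_eq_mul]
        gcongr with i
        exact (hball (hnear i) i).2
    _ = F x + ∑ i, c i * ⟪v, b i⟫ + ε / m * ∑ i, |c i| := by
        simp only [abs_mul, Nat.abs_cast, mul_add, Finset.sum_add_distrib, Finset.sum_const,
          Finset.card_univ, Fintype.card_fin, nsmul_eq_mul, Finset.mul_sum]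
        field_simp
    _ ≤ F x + ⟪v, y - x⟫ + ε / m * (m * ‖y - x‖) := by
        rw [hsum]
        gcongr
        simpa using Finset.sum_le_sum fun i (_ : i ∈ Finset.univ) => hc i
    _ = F x + ⟪v, y - x⟫ + ε * ‖y - x‖ := by field_simp

theorem ConvexOn.hasGradientAt_of_subgradient_unique (hF : ConvexOn ℝ D F)
    (hx : x ∈ interior D) (huniq : ∀ w, HasSubgradientOn F w D x → w = v) :
    HasGradientAt F v x := by
  have hv : HasSubgradientOn F v D x := hF.hasSubgradientOn_of_inner_le_rightLineDeriv hx
    fun d => (hF.rightLineDeriv_eq_inner hx huniq d).ge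
  rw [hasGradientAt_iff_isLittleO, Asymptotics.isLittleO_iff]
  intro ε hε
  filter_upwards [hF.eventually_le_of_eventually_le_along_lines hx
    (fun b _ hε => hF.eventually_le_along_line hx huniq b hε) hε,
    mem_interior_iff_mem_nhds.1 hx] with y hup hyD
  have hlow := hv y hyD
  rw [Real.norm_eq_abs, abs_le]
  constructor <;> nlinarith [norm_nonneg (y - x)]

lemma Convex.exists_ne_zero_inner_le_of_notMem_interior (hD : Convex ℝ D) (hxD : x ∈ D)
    (hx : x ∉ interior D) : ∃ w ≠ 0, ∀ y ∈ D, ⟪w, y - x⟫ ≤ 0 := by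
  by_cases hint : (interior D).Nonempty
  · obtain ⟨f, hf0, hf⟩ := geometric_hahn_banach_of_nonempty_interior_point hD hx hint
    refine ⟨(InnerProductSpace.toDual ℝ E).symm f, by simpa using hf0, fun y hy => ?_⟩
    rw [InnerProductSpace.toDual_symm_apply, map_sub]
    linarith [hf y hy]
  · have hspan : affineSpan ℝ D ≠ ⊤ := fun h =>
      hint (hD.interior_nonempty_iff_affineSpan_eq_top.2 h)
    have hdir : (affineSpan ℝ D).direction ≠ ⊤ := fun h => hspan
      ((AffineSubspace.direction_eq_top_iff_of_nonempty ⟨x, subset_affineSpan ℝ D hxD⟩).1 h)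
    obtain ⟨w, hw, hw0⟩ := Submodule.exists_mem_ne_zero_of_ne_bot
      fun h => hdir (Submodule.orthogonal_eq_bot_iff.1 h)
    refine ⟨w, hw0, fun y hy => le_of_eq ?_⟩
    have hyx : y - x ∈ (affineSpan ℝ D).direction :=
      AffineSubspace.vsub_mem_direction (subset_affineSpan ℝ D hy) (subset_affineSpan ℝ D hxD)
    exact real_inner_comm w (y - x) ▸ (Submodule.mem_orthogonal _ w).1 hw (y - x) hyx

lemma HasSubgradientOn.mem_interior_of_unique (hD : Convex ℝ D) (hxD : x ∈ D)
    (hv : HasSubgradientOn F v D x) (huniq : ∀ w, HasSubgradientOn F w D x → w = v) :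
    x ∈ interior D := by
  by_contra hx
  obtain ⟨w, hw0, hw⟩ := hD.exists_ne_zero_inner_le_of_notMem_interior hxD hx
  have hvw : HasSubgradientOn F (v + w) D x := fun y hy => by
    rw [inner_add_left]
    linarith [hv y hy, hw y hy]
  exact hw0 (add_eq_left.1 (huniq _ hvw))

end Subgradient

section ExtendedConvex

variable {g : EuclideanSpace ℝ (Fin n) → EReal} {xb v : EuclideanSpace ℝ (Fin n)} {p : ℝ}

/-- For `p = g xb` this is the Fenchel subdifferential `∂g(xb)`; taking the value at `xb` as a
real parameter keeps the `EReal` arithmetic out of the affine minorants. -/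
def subdiffAt (g : En → EReal) (xb : En) (p : ℝ) : Set En :=
  {v | ∀ x, ((p + ⟪v, x - xb⟫ : ℝ) : EReal) ≤ g x}

lemma ConvexE.le_coe_of_ne_top (hg : ConvexE g) (hbot : ∀ x, g x ≠ ⊥) {x y : En}
    (hx : g x ≠ ⊤) (hy : g y ≠ ⊤) {t : ℝ} (ht₀ : 0 < t) (ht₁ : t < 1) :
    g (t • x + (1 - t) • y) ≤ ((t * (g x).toReal + (1 - t) * (g y).toReal : ℝ) : EReal) := by
  have h := hg x y t ht₀ ht₁
  rwa [← EReal.coe_toReal hx (hbot x), ← EReal.coe_toReal hy (hbot y), ← EReal.coe_mul,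
    ← EReal.coe_mul, ← EReal.coe_add] at h

lemma ConvexE.convexOn_toReal (hg : ConvexE g) (hbot : ∀ x, g x ≠ ⊥) :
    ConvexOn ℝ {x | g x ≠ ⊤} (fun x => (g x).toReal) := by
  have hseg : ∀ ⦃x⦄, g x ≠ ⊤ → ∀ ⦃y⦄, g y ≠ ⊤ → ∀ ⦃a b : ℝ⦄, 0 < a → 0 < b → a + b = 1 →
      g (a • x + b • y) ≤ ((a * (g x).toReal + b * (g y).toReal : ℝ) : EReal) := by
    intro x hx y hy a b ha hb hab
    obtain rfl : b = 1 - a := by linarith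
    exact hg.le_coe_of_ne_top hbot hx hy ha (by linarith)
  have hconv : Convex ℝ {x | g x ≠ ⊤} := convex_iff_forall_pos.2
    fun x hx y hy a b ha hb hab => ne_top_of_le_ne_top (EReal.coe_ne_top _) (hseg hx hy ha hb hab)
  refine convexOn_iff_forall_pos.2 ⟨hconv, fun x hx y hy a b ha hb hab => ?_⟩
  have h := hseg hx hy ha hb hab
  rwa [← EReal.coe_toReal (hconv hx hy ha.le hb.le hab) (hbot _), EReal.coe_le_coe_iff] at h

lemma diffAtE_of_hasGradientAt {G : En → ℝ} (hG : HasGradientAt G v xb)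
    (hgG : ∀ᶠ y in 𝓝 xb, g y = G y) : DiffAtE g xb v := by
  rw [hasGradientAt_iff_isLittleO, Asymptotics.isLittleO_iff] at hG
  refine ⟨by simp [hgG.self_of_nhds], by simp [hgG.self_of_nhds], fun ε hε => ?_⟩
  filter_upwards [hG hε, hgG] with y hy hgy
  rw [Real.norm_eq_abs, abs_le] at hy
  rw [hgy, hgG.self_of_nhds, ← EReal.coe_add, ← EReal.coe_add, EReal.coe_le_coe_iff,
    EReal.coe_le_coe_iff]
  constructor <;> linarith [hy.1, hy.2]

lemma hasSubgradientOn_toReal_iff (hbot : ∀ x, g x ≠ ⊥) (hgx : g xb = p) (w : En) :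
    HasSubgradientOn (fun x => (g x).toReal) w {x | g x ≠ ⊤} xb ↔ w ∈ subdiffAt g xb p := by
  simp only [HasSubgradientOn, subdiffAt, mem_ofPred_eq, hgx, EReal.toReal_coe]
  refine ⟨fun h x => ?_, fun h x hx => ?_⟩
  · by_cases hx : g x = ⊤
    · simp [hx]
    · rw [← EReal.coe_toReal hx (hbot x), EReal.coe_le_coe_iff]
      exact h x hx
  · have := h x
    rwa [← EReal.coe_toReal hx (hbot x), EReal.coe_le_coe_iff] at this

theorem ConvexE.diffAtE_of_subdiffAt_eq_singleton (hg : ConvexE g) (hgx : g xb = p)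
    (hsub : subdiffAt g xb p = {v}) : DiffAtE g xb v := by
  have hv : v ∈ subdiffAt g xb p := hsub ▸ rfl
  have hbot : ∀ x, g x ≠ ⊥ := fun x hx => by simpa [hx] using hv x
  have hF := hg.convexOn_toReal hbot
  have huniq : ∀ w, HasSubgradientOn (fun x => (g x).toReal) w {x | g x ≠ ⊤} xb → w = v :=
    fun w hw => by simpa [hsub] using (hasSubgradientOn_toReal_iff hbot hgx w).1 hw
  have hint : xb ∈ interior {x | g x ≠ ⊤} :=
    HasSubgradientOn.mem_interior_of_unique hF.1 (by simp [hgx])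
      ((hasSubgradientOn_toReal_iff hbot hgx v).2 hv) huniq
  refine diffAtE_of_hasGradientAt (hF.hasGradientAt_of_subgradient_unique hint huniq) ?_
  filter_upwards [mem_interior_iff_mem_nhds.1 hint] with y hy
  exact (EReal.coe_toReal hy (hbot y)).symm

end ExtendedConvex

section ConvexHull

variable {g ψ : EuclideanSpace ℝ (Fin n) → EReal} {xb v w : EuclideanSpace ℝ (Fin n)} {p : ℝ}

lemma convHullE_le (ψ : En → EReal) (x : En) : convHullE ψ x ≤ ψ x :=
  sSup_le fun _ ⟨_, _, hle, hr⟩ => hr ▸ hle x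

lemma convexE_convHullE (ψ : En → EReal) : ConvexE (convHullE ψ) := by
  intro x y t ht₀ ht₁
  refine sSup_le fun _ ⟨h, hh, hle, hr⟩ => hr ▸ (hh x y t ht₀ ht₁).trans ?_
  gcongr
  · exact le_sSup ⟨h, hh, hle, rfl⟩
  · exact le_sSup ⟨h, hh, hle, rfl⟩

lemma convexE_affine (p : ℝ) (v xb : En) :
    ConvexE fun x => ((p + ⟪v, x - xb⟫ : ℝ) : EReal) := by
  intro x y t _ _
  rw [← EReal.coe_mul, ← EReal.coe_mul, ← EReal.coe_add, EReal.coe_le_coe_iff,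
    show t • x + (1 - t) • y - xb = t • (x - xb) + (1 - t) • (y - xb) by module,
    inner_add_right, real_inner_smul_right, real_inner_smul_right]
  linarith

lemma subdiffAt_convHullE : subdiffAt (convHullE ψ) xb p = subdiffAt ψ xb p := by
  ext v
  exact ⟨fun h x => (h x).trans (convHullE_le ψ x),
    fun h x => le_sSup ⟨_, convexE_affine p v xb, h, rfl⟩⟩

lemma convHullE_eq_of_mem_subdiffAt (hψ : ψ xb = p) (hv : v ∈ subdiffAt ψ xb p) :
    convHullE ψ xb = p := by
  have h : v ∈ subdiffAt (convHullE ψ) xb p := by rwa [subdiffAt_convHullE]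
  exact le_antisymm (hψ ▸ convHullE_le ψ xb) (by simpa using h xb)

lemma ConvexE.mem_subdiffAt_of_diffAtE (hg : ConvexE g) (hd : DiffAtE g xb v)
    (hgx : g xb = p) : v ∈ subdiffAt g xb p := by
  intro x
  have hchord : ∀ ε > 0, ∃ t ∈ Ioo (0 : ℝ) 1, ((p + t * (⟪v, x - xb⟫ - ε * ‖x - xb‖) : ℝ) : EReal)
      ≤ (t : EReal) * g x + ((1 - t : ℝ) : EReal) * p := by
    intro ε hε
    obtain ⟨t, ⟨ht₀, ht₁⟩, hlow, -⟩ := exists_mem_Ioo_of_eventually (hd.2.2 ε hε) (x - xb)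
    refine ⟨t, ⟨ht₀, ht₁⟩, ?_⟩
    have hconv := hg x xb t ht₀ ht₁
    rw [show t • x + (1 - t) • xb = xb + t • (x - xb) by module, hgx] at hconv
    rw [add_sub_cancel_left, hgx, real_inner_smul_right, norm_smul, Real.norm_of_nonneg ht₀.le,
      ← EReal.coe_add] at hlow
    convert hlow.trans hconv using 2
    ring
  induction hG : g x using EReal.rec with
  | top => exact le_top
  | bot =>
    obtain ⟨t, ⟨ht₀, -⟩, h⟩ := hchord 1 one_pos
    rw [hG, EReal.coe_mul_bot_of_pos ht₀, EReal.bot_add] at h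
    exact absurd (le_bot_iff.1 h) (EReal.coe_ne_bot _)
  | coe G =>
    rw [EReal.coe_le_coe_iff]
    refine le_of_forall_pos_le_add fun δ hδ => ?_
    obtain ⟨t, ⟨ht₀, ht₁⟩, h⟩ := hchord (δ / (‖x - xb‖ + 1)) (by positivity)
    rw [hG, ← EReal.coe_mul, ← EReal.coe_mul, ← EReal.coe_add, EReal.coe_le_coe_iff] at h
    have hδ' : δ / (‖x - xb‖ + 1) * ‖x - xb‖ ≤ δ := by
      rw [div_mul_eq_mul_div, div_le_iff₀ (by positivity)]
      nlinarith [norm_nonneg (x - xb)]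
    nlinarith

lemma DiffAtE.eq_of_mem_subdiffAt (hd : DiffAtE g xb v) (hgx : g xb = p)
    (hw : w ∈ subdiffAt g xb p) : w = v := by
  by_contra hne
  have hpos : 0 < ‖w - v‖ := norm_pos_iff.2 (sub_ne_zero.2 hne)
  obtain ⟨t, ⟨ht₀, -⟩, -, hup⟩ :=
    exists_mem_Ioo_of_eventually (hd.2.2 (‖w - v‖ / 2) (by positivity)) (w - v)
  have h := (hw _).trans hup
  rw [hgx, ← EReal.coe_add, EReal.coe_le_coe_iff, add_sub_cancel_left, real_inner_smul_right,
    real_inner_smul_right, norm_smul, Real.norm_of_nonneg ht₀.le] at h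
  have hsq : ⟪w, w - v⟫ - ⟪v, w - v⟫ = ‖w - v‖ ^ 2 := by
    rw [← inner_sub_left, real_inner_self_eq_norm_sq]
  nlinarith [mul_pos ht₀ hpos]

theorem subdiffAt_eq_singleton_iff (hψ : ψ xb = p) :
    subdiffAt ψ xb p = {v} ↔ DiffAtE (convHullE ψ) xb v ∧ convHullE ψ xb = ψ xb := by
  constructor
  · intro hsub
    have hconv : convHullE ψ xb = p := convHullE_eq_of_mem_subdiffAt hψ (hsub ▸ mem_singleton v)
    exact ⟨(convexE_convHullE ψ).diffAtE_of_subdiffAt_eq_singleton hconv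
      (subdiffAt_convHullE.trans hsub), hconv.trans hψ.symm⟩
  · rintro ⟨hd, hconv⟩
    rw [hψ] at hconv
    rw [← subdiffAt_convHullE, eq_singleton_iff_unique_mem]
    exact ⟨(convexE_convHullE ψ).mem_subdiffAt_of_diffAtE hd hconv,
      fun w hw => hd.eq_of_mem_subdiffAt hconv hw⟩

end ConvexHull

lemma psub_eq_preimage_subdiffAt {φ : En → ℝ} {domφ : Set En} {gradφ : En → En} {lam : ℝ}
    {f : En → EReal} (hftop : ∀ x ∉ domφ, f x = ⊤) {xb : En} (hxb : xb ∈ interior domφ)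
    {q : ℝ} (hq : f xb = q) :
    psub φ domφ gradφ lam f xb = (· + lam⁻¹ • gradφ xb) ⁻¹'
      subdiffAt (fun x => f x + ((lam⁻¹ * φ x : ℝ) : EReal)) xb (q + lam⁻¹ * φ xb) := by
  have key : ∀ u x, f xb + ((⟪u, x - xb⟫ - lam⁻¹ * breg φ gradφ x xb : ℝ) : EReal) ≤ f x ↔
      ((q + lam⁻¹ * φ xb + ⟪u + lam⁻¹ • gradφ xb, x - xb⟫ : ℝ) : EReal)
        ≤ f x + ((lam⁻¹ * φ x : ℝ) : EReal) := by
    intro u x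
    rw [← EReal.sub_le_iff_le_add (.inl (EReal.coe_ne_bot _)) (.inl (EReal.coe_ne_top _)),
      ← EReal.coe_sub, hq, ← EReal.coe_add]
    congr! 2
    simp only [breg, inner_add_left, real_inner_smul_left]
    ring
  ext u
  simp only [psub, subdiffAt, mem_ofPred_eq, mem_preimage]
  refine ⟨fun ⟨_, h⟩ x => ?_, fun h => ⟨hxb, fun x _ => (key u x).2 (h x)⟩⟩
  by_cases hx : x ∈ domφ
  · exact (key u x).1 (h x hx)
  · rw [hftop x hx, EReal.top_add_coe]
    exact le_top

theorem psub_singleton_iff_conv_differentiable_general (φ : En → ℝ) (domφ : Set En)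
    (gradφ : En → En)
    (f : En → EReal) (hftop : ∀ x ∉ domφ, f x = ⊤) (hfbot : ∀ x, f x ≠ ⊥)
    (hfproper : ∃ x ∈ domφ, f x ≠ ⊤)
    (lam : ℝ)
    (xb : En) (hxb : xb ∈ interior domφ) :
    ((∃ u, psub φ domφ gradφ lam f xb = {u}) ↔
      (∃ v, DiffAtE (convHullE fun x => f x + ((lam⁻¹ * φ x : ℝ) : EReal)) xb v ∧
        convHullE (fun x => f x + ((lam⁻¹ * φ x : ℝ) : EReal)) xb =
          f xb + ((lam⁻¹ * φ xb : ℝ) : EReal))) ∧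
    (∀ u, psub φ domφ gradφ lam f xb = {u} →
      DiffAtE (convHullE fun x => f x + ((lam⁻¹ * φ x : ℝ) : EReal)) xb
        (u + lam⁻¹ • gradφ xb) ∧
      convHullE (fun x => f x + ((lam⁻¹ * φ x : ℝ) : EReal)) xb =
        f xb + ((lam⁻¹ * φ xb : ℝ) : EReal)) := by
  set ψ : En → EReal := fun x => f x + ((lam⁻¹ * φ x : ℝ) : EReal)
  have hreduce : ∀ q : ℝ, f xb = q → ∀ u, psub φ domφ gradφ lam f xb = {u} ↔
      DiffAtE (convHullE ψ) xb (u + lam⁻¹ • gradφ xb) ∧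
        convHullE ψ xb = ψ xb := by
    intro q hq u
    have hψ : ψ xb = (q + lam⁻¹ * φ xb : ℝ) := by simp only [ψ, hq, EReal.coe_add]
    rw [psub_eq_preimage_subdiffAt hftop hxb hq, ← subdiffAt_eq_singleton_iff hψ,
      ← image_eq_image (add_left_injective (lam⁻¹ • gradφ xb)),
      image_preimage_eq _ (add_right_surjective _), image_singleton]
  have hfin : f xb ≠ ⊤ → ∃ q : ℝ, f xb = q := fun h => ⟨_, (EReal.coe_toReal h (hfbot xb)).symm⟩
  have hfwd : ∀ u, psub φ domφ gradφ lam f xb = {u} →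
      DiffAtE (convHullE ψ) xb (u + lam⁻¹ • gradφ xb) ∧
        convHullE ψ xb = ψ xb := by
    intro u hu
    obtain ⟨q, hq⟩ := hfin fun htop => by
      obtain ⟨x, hx, hfx⟩ := hfproper
      have h := (hu ▸ mem_singleton u : u ∈ psub φ domφ gradφ lam f xb).2 x hx
      rw [htop, EReal.top_add_coe, top_le_iff] at h
      exact hfx h
    exact (hreduce q hq u).1 hu
  refine ⟨⟨fun ⟨u, hu⟩ => ⟨_, hfwd u hu⟩, fun ⟨v, hd, heq⟩ => ?_⟩, hfwd⟩
  obtain ⟨q, hq⟩ := hfin fun htop => hd.1 (by rw [heq, htop, EReal.top_add_coe])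
  exact ⟨v - lam⁻¹ • gradφ xb, (hreduce q hq _).2 (by rw [sub_add_cancel]; exact ⟨hd, heq⟩)⟩

/-- `∂_λ^φ f(x̄)` is a singleton iff `conv(f + λ⁻¹φ)` is differentiable
at `x̄` and coincides with `f + λ⁻¹φ` there; in that case
`∇conv(f + λ⁻¹φ)(x̄) = ū + λ⁻¹∇φ(x̄)` where `{ū} = ∂_λ^φ f(x̄)`. -/
theorem psub_singleton_iff_conv_differentiable (φ : En → ℝ) (domφ : Set En)
    (gradφ : En → En)
    (hLeg : IsLegendre φ domφ gradφ)
    (hcoer : Coercive1 φ domφ)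
    (f : En → EReal) (hftop : ∀ x ∉ domφ, f x = ⊤) (hfbot : ∀ x, f x ≠ ⊥)
    (hfproper : ∃ x ∈ domφ, f x ≠ ⊤)
    (hflsc : LowerSemicontinuousOn f domφ)
    (lam : ℝ) (hlam : 0 < lam)
    (hpb : ∃ μ : ℝ, lam < μ ∧ ∃ y ∈ interior domφ, envL φ domφ gradφ μ f y ≠ ⊥)
    (xb : En) (hxb : xb ∈ interior domφ) :
    ((∃ u, psub φ domφ gradφ lam f xb = {u}) ↔
      (∃ v, DiffAtE (convHullE fun x => f x + ((lam⁻¹ * φ x : ℝ) : EReal)) xb v ∧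
        convHullE (fun x => f x + ((lam⁻¹ * φ x : ℝ) : EReal)) xb =
          f xb + ((lam⁻¹ * φ xb : ℝ) : EReal))) ∧
    (∀ u, psub φ domφ gradφ lam f xb = {u} →
      DiffAtE (convHullE fun x => f x + ((lam⁻¹ * φ x : ℝ) : EReal)) xb
        (u + lam⁻¹ • gradφ xb) ∧
      convHullE (fun x => f x + ((lam⁻¹ * φ x : ℝ) : EReal)) xb =
        f xb + ((lam⁻¹ * φ xb : ℝ) : EReal)) :=
  psub_singleton_iff_conv_differentiable_general φ domφ gradφ f hftop hfbot hfproper lam xb hxb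

end
end
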